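/- The Taylor expansion of f(x,y) = -2Λ(x+y) + 2Λ(y) + Λ(x) around (π/2, π/4) is f(π/2 + x, π/4 + y) = f(π/2, π/4) - (x² + 2xy + 2y²) + O(|x|³ + |y|³) as (x,y) → (0,0). -/

import Mathlib

/-!
On `(0, π)` the Lobachevsky function is smooth, with `Λ' θ = -log |2 sin θ|` and
`Λ'' θ = -cot θ`, so Taylor's theorem bounds its second-order remainder at `θ₀` by `O(h³)`.
The three terms of `f (π/2 + x) (π/4 + y)` are expanded at `3π/4`, `π/4` and `π/2`, where
`log |2 sin|` equals `log 2 / 2`, `log 2 / 2`, `log 2` and `cot` equals `-1`, `1`, `0`: the linear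
terms cancel and the quadratic ones add up to `-(x² + 2xy + 2y²)`.
-/

open Real Asymptotics

noncomputable def lob (θ : ℝ) : ℝ := -∫ t in (0:ℝ)..θ, Real.log |2 * Real.sin t|

noncomputable def f (x y : ℝ) : ℝ := -2 * lob (x + y) + 2 * lob y + lob x

open Filter Topology Set MeasureTheory
open scoped Nat ContDiff

theorem ContDiffAt.isBigO_sub_taylor {E : Type*} [NormedAddCommGroup E] [NormedSpace ℝ E]
    {g : ℝ → E} {x₀ : ℝ} {n : ℕ} (hg : ContDiffAt ℝ (n + 1) g x₀) :
    (fun x ↦ g x - ∑ k ∈ Finset.range (n + 1), ((k ! : ℝ)⁻¹ * (x - x₀) ^ k) • iteratedDeriv k g x₀)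
      =O[𝓝 x₀] fun x ↦ (x - x₀) ^ (n + 1) := by
  obtain ⟨u, hu, hgu⟩ := hg.contDiffOn le_rfl (by simp)
  obtain ⟨ε, hε, hball⟩ := Metric.mem_nhds_iff.1 hu
  have hx₀ : x₀ ∈ Metric.ball x₀ ε := Metric.mem_ball_self hε
  have htaylor := taylor_isLittleO (convex_ball x₀ ε) hx₀ (hgu.mono hball)
  rw [Metric.isOpen_ball.nhdsWithin_eq hx₀] at htaylor
  have hcoeff : ∀ k, iteratedDerivWithin k g (Metric.ball x₀ ε) x₀ = iteratedDeriv k g x₀ :=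
    fun k ↦ iteratedDerivWithin_of_isOpen Metric.isOpen_ball hx₀
  have hsplit : ∀ x, g x -
        ∑ k ∈ Finset.range (n + 1), ((k ! : ℝ)⁻¹ * (x - x₀) ^ k) • iteratedDeriv k g x₀ =
      (g x - taylorWithinEval g (n + 1) (Metric.ball x₀ ε) x₀ x)
        + (((n + 1 : ℝ) * n !)⁻¹ * (x - x₀) ^ (n + 1)) • iteratedDeriv (n + 1) g x₀ := by
    intro x
    rw [taylorWithinEval_succ, taylor_within_apply]
    simp only [hcoeff]
    abel
  simp_rw [hsplit]
  refine htaylor.isBigO.add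
    (.of_bound (((n + 1 : ℝ) * n !)⁻¹ * ‖iteratedDeriv (n + 1) g x₀‖) (.of_forall fun x ↦ ?_))
  rw [norm_smul, norm_mul, norm_inv, Real.norm_of_nonneg (by positivity)]
  exact (mul_right_comm _ _ _).le

theorem intervalIntegrable_log_abs_two_mul_sin (a b : ℝ) :
    IntervalIntegrable (fun t ↦ log |2 * sin t|) volume a b :=
  (analyticOnNhd_const.mul analyticOnNhd_sin).meromorphicOn.intervalIntegrable_log_norm

theorem hasDerivAt_lob {θ : ℝ} (hθ : sin θ ≠ 0) : HasDerivAt lob (-log |2 * sin θ|) θ := by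
  have hcont : Continuous fun t ↦ 2 * sin t := continuous_const.mul continuous_sin
  refine (intervalIntegral.integral_hasDerivAt_right (intervalIntegrable_log_abs_two_mul_sin 0 θ)
    ?_ ?_).neg
  · exact (measurable_log.comp (hcont.measurable.abs)).stronglyMeasurable.stronglyMeasurableAtFilter
  · exact (hcont.abs.continuousAt).log (by simpa using hθ)

theorem contDiffOn_lob : ContDiffOn ℝ ∞ lob (Ioo 0 π) := by
  have hsin : ∀ θ ∈ Ioo 0 π, sin θ ≠ 0 := fun θ hθ ↦ (sin_pos_of_pos_of_lt_pi hθ.1 hθ.2).ne'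
  rw [contDiffOn_infty_iff_deriv_of_isOpen isOpen_Ioo]
  refine ⟨fun θ hθ ↦ (hasDerivAt_lob (hsin θ hθ)).differentiableAt.differentiableWithinAt, ?_⟩
  refine ContDiffOn.congr ?_ fun θ hθ ↦ (hasDerivAt_lob (hsin θ hθ)).deriv
  simp only [log_abs]
  exact ((contDiffOn_const.mul contDiff_sin.contDiffOn).log
    fun θ hθ ↦ by simpa using hsin θ hθ).neg

theorem iteratedDeriv_two_lob {θ : ℝ} (hθ : sin θ ≠ 0) : iteratedDeriv 2 lob θ = -cot θ := by
  have hderiv : deriv lob =ᶠ[𝓝 θ] fun t ↦ -log (2 * sin t) := by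
    filter_upwards [continuous_sin.continuousAt.eventually_ne hθ] with t ht
    rw [(hasDerivAt_lob ht).deriv, log_abs]
  have hlog : HasDerivAt (fun t ↦ -log (2 * sin t)) (-cot θ) θ := by
    have := (((hasDerivAt_sin θ).const_mul 2).log (by simpa using hθ)).neg
    rwa [mul_div_mul_left _ _ two_ne_zero, ← cot_eq_cos_div_sin] at this
  rw [iteratedDeriv_succ, iteratedDeriv_one, hderiv.deriv_eq, hlog.deriv]

noncomputable def lobTaylorRemainder (θ₀ h : ℝ) : ℝ :=
  lob (θ₀ + h) - lob θ₀ + log |2 * sin θ₀| * h + cot θ₀ * h ^ 2 / 2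

theorem lobTaylorRemainder_isBigO {θ₀ : ℝ} (h0 : 0 < θ₀) (hπ : θ₀ < π) :
    lobTaylorRemainder θ₀ =O[𝓝 0] fun h ↦ h ^ 3 := by
  have hsin : sin θ₀ ≠ 0 := (sin_pos_of_pos_of_lt_pi h0 hπ).ne'
  have hlob : ContDiffAt ℝ (2 + 1) lob θ₀ :=
    (contDiffOn_lob.contDiffAt (Ioo_mem_nhds h0 hπ)).of_le (by norm_cast)
  have hshift : Tendsto (θ₀ + ·) (𝓝 0) (𝓝 θ₀) :=
    (continuous_const_add θ₀).tendsto' 0 θ₀ (add_zero θ₀)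
  refine (hlob.isBigO_sub_taylor.comp_tendsto hshift).congr (fun h ↦ ?_) (fun h ↦ ?_)
  · simp only [lobTaylorRemainder, Function.comp_apply, add_sub_cancel_left, smul_eq_mul,
      Finset.sum_range_succ, Finset.sum_range_zero, iteratedDeriv_zero, iteratedDeriv_one,
      (hasDerivAt_lob hsin).deriv, iteratedDeriv_two_lob hsin, Nat.factorial, Nat.cast_one]
    ring
  · simp

theorem abs_add_pow_three_le (x y : ℝ) : |x + y| ^ 3 ≤ 4 * (|x| ^ 3 + |y| ^ 3) :=
  (pow_le_pow_left₀ (abs_nonneg _) (abs_add_le x y) 3).trans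
    ((add_pow_le (abs_nonneg x) (abs_nonneg y) 3).trans_eq (by norm_num))

theorem f_sub_f_add_quadratic_eq (x y : ℝ) :
    f (π / 2 + x) (π / 4 + y) - f (π / 2) (π / 4) + (x ^ 2 + 2 * x * y + 2 * y ^ 2) =
      -2 * lobTaylorRemainder (3 * π / 4) (x + y) + 2 * lobTaylorRemainder (π / 4) y
        + lobTaylorRemainder (π / 2) x := by
  have hsin : sin (3 * π / 4) = sin (π / 4) := by rw [← sin_pi_sub]; ring_nf
  have hcos : cos (3 * π / 4) = -cos (π / 4) := by rw [← cos_pi_sub]; ring_nf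
  have hlog : log |2 * sin (π / 4)| = log 2 / 2 := by
    rw [sin_pi_div_four, mul_div_cancel₀ _ two_ne_zero, abs_of_nonneg (sqrt_nonneg _),
      log_sqrt zero_le_two]
  have hcot : cot (π / 4) = 1 := by
    rw [cot_eq_cos_div_sin, cos_pi_div_four, sin_pi_div_four, div_self (by positivity)]
  have hcot' : cot (3 * π / 4) = -1 := by
    rw [cot_eq_cos_div_sin, hsin, hcos, neg_div, ← cot_eq_cos_div_sin, hcot]
  simp only [f]
  rw [show π / 2 + x + (π / 4 + y) = 3 * π / 4 + (x + y) by ring,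
    show π / 2 + π / 4 = 3 * π / 4 by ring]
  simp only [lobTaylorRemainder, hcot, hcot', cot_eq_cos_div_sin (π / 2), cos_pi_div_two,
    sin_pi_div_two, hsin, hlog, mul_one, abs_two, zero_div]
  ring

theorem taylor_expansion :
    (fun p : ℝ × ℝ =>
        f (π / 2 + p.1) (π / 4 + p.2) - f (π / 2) (π / 4)
          + (p.1 ^ 2 + 2 * p.1 * p.2 + 2 * p.2 ^ 2)) =O[nhds (0 : ℝ × ℝ)]
      fun p : ℝ × ℝ => |p.1| ^ 3 + |p.2| ^ 3 := by
  have hπ := pi_pos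
  have hnorm : ∀ p : ℝ × ℝ, ‖|p.1| ^ 3 + |p.2| ^ 3‖ = |p.1| ^ 3 + |p.2| ^ 3 :=
    fun p ↦ Real.norm_of_nonneg (by positivity)
  have hsum : (fun p : ℝ × ℝ ↦ (p.1 + p.2) ^ 3) =O[𝓝 0] fun p ↦ |p.1| ^ 3 + |p.2| ^ 3 :=
    .of_bound 4 (.of_forall fun p ↦ by simpa [hnorm] using abs_add_pow_three_le p.1 p.2)
  have hfst : (fun p : ℝ × ℝ ↦ p.1 ^ 3) =O[𝓝 0] fun p ↦ |p.1| ^ 3 + |p.2| ^ 3 :=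
    .of_bound 1 (.of_forall fun p ↦ by simp [hnorm])
  have hsnd : (fun p : ℝ × ℝ ↦ p.2 ^ 3) =O[𝓝 0] fun p ↦ |p.1| ^ 3 + |p.2| ^ 3 :=
    .of_bound 1 (.of_forall fun p ↦ by simp [hnorm])
  simp_rw [f_sub_f_add_quadratic_eq]
  refine ((IsBigO.const_mul_left ?_ (-2)).add (IsBigO.const_mul_left ?_ 2)).add ?_
  · exact ((lobTaylorRemainder_isBigO (by positivity) (by linarith)).comp_tendsto
      ((continuous_fst.add continuous_snd).tendsto' 0 0 (add_zero 0))).trans hsum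
  · exact ((lobTaylorRemainder_isBigO (by positivity) (by linarith)).comp_tendsto
      (continuous_snd.tendsto' 0 0 rfl)).trans hsnd
  · exact ((lobTaylorRemainder_isBigO (by positivity) (by linarith)).comp_tendsto
      (continuous_fst.tendsto' 0 0 rfl)).trans hfst
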